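/- For the Leslie–Gower competition map with C₁₂ > 0 and C₂₁ > 0, the regions R₂ = {(X,Y) : X, Y > 0, h(X) ≤ Y ≤ k(X)} \ {E*} and R₄ = {(X,Y) : X, Y > 0, k(X) ≤ Y ≤ h(X)} \ {E*} are each positively invariant, and the coexistence equilibrium E* is globally asymptotically stable with respect to orbits with X₀, Y₀ > 0. -/

import Mathlib

noncomputable def F (r₁ K₁ α₁ X Y : ℝ) : ℝ := (1 + r₁) * X / (1 + r₁ / K₁ * X + α₁ * Y)
noncomputable def G (r₂ K₂ α₂ X Y : ℝ) : ℝ := (1 + r₂) * Y / (1 + r₂ / K₂ * Y + α₂ * X)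
noncomputable def h (r₁ K₁ α₁ X : ℝ) : ℝ := r₁ / (α₁ * K₁) * (K₁ - X)
noncomputable def k (r₂ K₂ α₂ X : ℝ) : ℝ := K₂ / r₂ * (r₂ - α₂ * X)
noncomputable def T (r₁ r₂ K₁ K₂ α₁ α₂ : ℝ) (p : ℝ × ℝ) : ℝ × ℝ :=
  (F r₁ K₁ α₁ p.1 p.2, G r₂ K₂ α₂ p.1 p.2)

/-!
The map is competitive: `F` increases in `X` and decreases in `Y`, and `G` the other way round,
so `T` preserves the southeast ordering of the plane. In `R₂` the first species declines and the
second grows, and neither crosses its own nullcline, so `R₂` is invariant and the orbits in it are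
monotone and bounded by `E*`; their limits are fixed points, hence equal to `E*`. Exchanging the
species turns `R₄` into `R₂`.

Each species follows Beverton–Holt dynamics slowed down by competition, so every orbit eventually
lies below the lines `X = r₂ / α₂` and `Y = r₁ / α₁`. There it is squeezed, in the southeast
ordering, between an orbit starting on the nullcline `Y = h X` inside `R₄` and one starting on
`Y = k X` inside `R₂`, both of which converge to `E*`. Choosing these two corners close to `E*`
gives stability.
-/

open Filter Topology

-- `G r K α X Y` is `F r K α Y X` by definition, so the lemmas about `F` serve both species.
section OneSpecies

variable {r K α X Y X' Y' : ℝ}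

/-- The denominator of `F` is `1 + crowding`, so `X` grows exactly when `crowding < r`. -/
noncomputable def crowding (r K α X Y : ℝ) : ℝ := r / K * X + α * Y

lemma F_denom_pos (hr : 0 < r) (hK : 0 < K) (hα : 0 < α) (hX : 0 ≤ X) (hY : 0 ≤ Y) :
    0 < 1 + r / K * X + α * Y := by
  positivity

lemma F_pos (hr : 0 < r) (hK : 0 < K) (hα : 0 < α) (hX : 0 < X) (hY : 0 ≤ Y) :
    0 < F r K α X Y :=
  div_pos (by positivity) (F_denom_pos hr hK hα hX.le hY)

lemma F_sub_self (hD : 1 + r / K * X + α * Y ≠ 0) :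
    F r K α X Y - X = X * (r - crowding r K α X Y) / (1 + r / K * X + α * Y) := by
  rw [eq_div_iff hD, sub_mul, F, div_mul_cancel₀ _ hD, crowding]
  ring

lemma crowding_F_sub (hD : 1 + r / K * X + α * Y ≠ 0) :
    crowding r K α (F r K α X Y) Y - r =
      (crowding r K α X Y - r) * (1 + α * Y) / (1 + r / K * X + α * Y) := by
  rw [eq_div_iff hD, crowding, crowding, sub_mul, add_mul, F, mul_assoc, div_mul_cancel₀ _ hD]
  ring

lemma F_le_self (hr : 0 < r) (hK : 0 < K) (hα : 0 < α) (hX : 0 ≤ X) (hY : 0 ≤ Y)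
    (h : r ≤ crowding r K α X Y) : F r K α X Y ≤ X := by
  have hD := F_denom_pos hr hK hα hX hY
  rw [← sub_nonpos, F_sub_self hD.ne']
  exact div_nonpos_of_nonpos_of_nonneg (mul_nonpos_of_nonneg_of_nonpos hX (by linarith)) hD.le

lemma self_le_F (hr : 0 < r) (hK : 0 < K) (hα : 0 < α) (hX : 0 ≤ X) (hY : 0 ≤ Y)
    (h : crowding r K α X Y ≤ r) : X ≤ F r K α X Y := by
  have hD := F_denom_pos hr hK hα hX hY
  rw [← sub_nonneg, F_sub_self hD.ne']
  exact div_nonneg (mul_nonneg hX (by linarith)) hD.le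

lemma crowding_eq_of_F_eq_self (hr : 0 < r) (hK : 0 < K) (hα : 0 < α) (hX : 0 < X)
    (hY : 0 ≤ Y) (h : F r K α X Y = X) : crowding r K α X Y = r := by
  have hD := F_denom_pos hr hK hα hX.le hY
  have h0 : X * (r - crowding r K α X Y) / (1 + r / K * X + α * Y) = 0 := by
    rw [← F_sub_self hD.ne', h, sub_self]
  have := (mul_eq_zero.1 ((div_eq_zero_iff.1 h0).resolve_right hD.ne')).resolve_left hX.ne'
  linarith

/-- `F` moves `X` towards the nullcline `crowding = r` without crossing it. -/
lemma r_le_crowding_F (hr : 0 < r) (hK : 0 < K) (hα : 0 < α) (hX : 0 ≤ X) (hY : 0 ≤ Y)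
    (h : r ≤ crowding r K α X Y) : r ≤ crowding r K α (F r K α X Y) Y := by
  have hD := F_denom_pos hr hK hα hX hY
  rw [← sub_nonneg, crowding_F_sub hD.ne']
  exact div_nonneg (mul_nonneg (by linarith) (by positivity)) hD.le

lemma crowding_F_le_r (hr : 0 < r) (hK : 0 < K) (hα : 0 < α) (hX : 0 ≤ X) (hY : 0 ≤ Y)
    (h : crowding r K α X Y ≤ r) : crowding r K α (F r K α X Y) Y ≤ r := by
  have hD := F_denom_pos hr hK hα hX hY
  rw [← sub_nonpos, crowding_F_sub hD.ne']
  exact div_nonpos_of_nonpos_of_nonneg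
    (mul_nonpos_of_nonpos_of_nonneg (by linarith) (by positivity)) hD.le

lemma F_mono (hr : 0 < r) (hK : 0 < K) (hα : 0 < α) (hX : 0 ≤ X) (hXX' : X ≤ X')
    (hY' : 0 ≤ Y') (hYY' : Y' ≤ Y) : F r K α X Y ≤ F r K α X' Y' := by
  unfold F
  rw [div_le_div_iff₀ (F_denom_pos hr hK hα hX (hY'.trans hYY'))
    (F_denom_pos hr hK hα (hX.trans hXX') hY')]
  have : X * Y' ≤ X' * Y := mul_le_mul hXX' hYY' hY' (hX.trans hXX')
  nlinarith [mul_nonneg (by linarith : (0 : ℝ) ≤ 1 + r)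
    (by nlinarith : 0 ≤ X' - X + α * (X' * Y - X * Y'))]

/-- The reciprocal `1 / X` of Beverton–Holt dynamics is affine; competition only increases it. -/
lemma inv_F_sub_inv_K (hr : 0 < r) (hK : 0 < K) (hα : 0 < α) (hX : 0 < X) (hY : 0 ≤ Y) :
    (X⁻¹ - K⁻¹) / (1 + r) ≤ (F r K α X Y)⁻¹ - K⁻¹ := by
  have key : (F r K α X Y)⁻¹ - K⁻¹ = (X⁻¹ - K⁻¹) / (1 + r) + α * Y / ((1 + r) * X) := by
    unfold F
    field_simp
    ring
  rw [key]
  exact le_add_of_nonneg_right (by positivity)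

lemma h_eq_div (hK : 0 < K) (hα : 0 < α) : h r K α X = (r - r / K * X) / α := by
  unfold h
  field_simp

lemma k_eq_div (hr : 0 < r) (hK : 0 < K) : k r K α X = (r - α * X) / (r / K) := by
  unfold k
  field_simp

end OneSpecies

def posQuadrant : Set (ℝ × ℝ) := {p | 0 < p.1 ∧ 0 < p.2}

/-- The southeast ordering, which competitive maps preserve. -/
def CompLE (p q : ℝ × ℝ) : Prop := p.1 ≤ q.1 ∧ q.2 ≤ p.2

lemma CompLE.trans {p q s : ℝ × ℝ} (hpq : CompLE p q) (hqs : CompLE q s) : CompLE p s :=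
  ⟨hpq.1.trans hqs.1, hqs.2.trans hpq.2⟩

lemma compLE_swap {p q : ℝ × ℝ} : CompLE q.swap p.swap ↔ CompLE p q := And.comm

lemma dist_le_max_of_compLE {a p b : ℝ × ℝ} (hap : CompLE a p) (hpb : CompLE p b) (e : ℝ × ℝ) :
    dist p e ≤ max (dist a e) (dist b e) := by
  simp only [Prod.dist_eq, Real.dist_eq]
  have h₁ := abs_le_max_abs_abs (sub_le_sub_right hap.1 e.1) (sub_le_sub_right hpb.1 e.1)
  have h₂ := abs_le_max_abs_abs (sub_le_sub_right hpb.2 e.2) (sub_le_sub_right hap.2 e.2)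
  refine max_le (h₁.trans (max_le_max (le_max_left _ _) (le_max_left _ _)))
    (h₂.trans ?_)
  rw [max_comm]
  exact max_le_max (le_max_right _ _) (le_max_right _ _)

lemma tendsto_of_compLE_of_compLE {u v w : ℕ → ℝ × ℝ} {L : ℝ × ℝ}
    (hu : Tendsto u atTop (𝓝 L)) (hw : Tendsto w atTop (𝓝 L))
    (huv : ∀ t, CompLE (u t) (v t)) (hvw : ∀ t, CompLE (v t) (w t)) :
    Tendsto v atTop (𝓝 L) := by
  rw [Prod.tendsto_iff] at hu hw ⊢
  exact ⟨tendsto_of_tendsto_of_tendsto_of_le_of_le hu.1 hw.1 (fun t => (huv t).1)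
      (fun t => (hvw t).1),
    tendsto_of_tendsto_of_tendsto_of_le_of_le hw.2 hu.2 (fun t => (hvw t).2)
      (fun t => (huv t).2)⟩

structure LeslieGower where
  r₁ : ℝ
  r₂ : ℝ
  K₁ : ℝ
  K₂ : ℝ
  α₁ : ℝ
  α₂ : ℝ
  hr₁ : 0 < r₁
  hr₂ : 0 < r₂
  hK₁ : 0 < K₁
  hK₂ : 0 < K₂
  hα₁ : 0 < α₁
  hα₂ : 0 < α₂

namespace LeslieGower

variable (P : LeslieGower) {p q a b : ℝ × ℝ}

noncomputable def map : ℝ × ℝ → ℝ × ℝ := T P.r₁ P.r₂ P.K₁ P.K₂ P.α₁ P.α₂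

def swap : LeslieGower :=
  ⟨P.r₂, P.r₁, P.K₂, P.K₁, P.α₂, P.α₁, P.hr₂, P.hr₁, P.hK₂, P.hK₁, P.hα₂, P.hα₁⟩

lemma iterate_map_swap (t : ℕ) (p : ℝ × ℝ) : P.swap.map^[t] p.swap = (P.map^[t] p).swap :=
  (Function.Semiconj.iterate_right (f := Prod.swap) (ga := P.map) (gb := P.swap.map)
    (fun _ => rfl) t p).symm

noncomputable def crowding₁ (p : ℝ × ℝ) : ℝ := crowding P.r₁ P.K₁ P.α₁ p.1 p.2

noncomputable def crowding₂ (p : ℝ × ℝ) : ℝ := crowding P.r₂ P.K₂ P.α₂ p.2 p.1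

/-- The closed region `h ≤ Y ≤ k` in the open quadrant. -/
def R2 : Set (ℝ × ℝ) :=
  {p | 0 < p.1 ∧ 0 < p.2 ∧ P.r₁ ≤ P.crowding₁ p ∧ P.crowding₂ p ≤ P.r₂}

/-- The region `k ≤ Y ≤ h`, obtained from `R2` by exchanging the species. -/
def R4 : Set (ℝ × ℝ) := Prod.swap ⁻¹' P.swap.R2

lemma mem_R2_iff {X Y : ℝ} : (X, Y) ∈ P.R2 ↔
    0 < X ∧ 0 < Y ∧ h P.r₁ P.K₁ P.α₁ X ≤ Y ∧ Y ≤ k P.r₂ P.K₂ P.α₂ X := by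
  rw [h_eq_div P.hK₁ P.hα₁, k_eq_div P.hr₂ P.hK₂, div_le_iff₀ P.hα₁,
    le_div_iff₀ (div_pos P.hr₂ P.hK₂)]
  simp only [R2, Set.mem_ofPred_eq, crowding₁, crowding₂, crowding]
  constructor <;> rintro ⟨h₁, h₂, h₃, h₄⟩ <;> exact ⟨h₁, h₂, by linarith, by linarith⟩

lemma mem_R4_iff {X Y : ℝ} : (X, Y) ∈ P.R4 ↔
    0 < X ∧ 0 < Y ∧ k P.r₂ P.K₂ P.α₂ X ≤ Y ∧ Y ≤ h P.r₁ P.K₁ P.α₁ X := by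
  rw [h_eq_div P.hK₁ P.hα₁, k_eq_div P.hr₂ P.hK₂, le_div_iff₀ P.hα₁,
    div_le_iff₀ (div_pos P.hr₂ P.hK₂)]
  simp only [R4, R2, swap, Set.mem_preimage, Prod.swap_prod_mk, Set.mem_ofPred_eq, crowding₁,
    crowding₂, crowding]
  constructor <;> rintro ⟨h₁, h₂, h₃, h₄⟩ <;> exact ⟨h₂, h₁, by linarith, by linarith⟩

lemma mapsTo_posQuadrant : Set.MapsTo P.map posQuadrant posQuadrant := fun _ hp =>
  ⟨F_pos P.hr₁ P.hK₁ P.hα₁ hp.1 hp.2.le, F_pos P.hr₂ P.hK₂ P.hα₂ hp.2 hp.1.le⟩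

lemma continuousAt_map (hp : p ∈ posQuadrant) : ContinuousAt P.map p := by
  have h₁ := (F_denom_pos P.hr₁ P.hK₁ P.hα₁ hp.1.le hp.2.le).ne'
  have h₂ := (F_denom_pos P.hr₂ P.hK₂ P.hα₂ hp.2.le hp.1.le).ne'
  unfold map T F G
  fun_prop (disch := assumption)

lemma map_mono (ha : 0 ≤ a.1) (hq : 0 ≤ q.2) (h : CompLE a q) : CompLE (P.map a) (P.map q) :=
  ⟨F_mono P.hr₁ P.hK₁ P.hα₁ ha h.1 hq h.2, F_mono P.hr₂ P.hK₂ P.hα₂ hq h.2 ha h.1⟩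

lemma iterate_mono (ha : a ∈ posQuadrant) (hq : q ∈ posQuadrant) (h : CompLE a q) (t : ℕ) :
    CompLE (P.map^[t] a) (P.map^[t] q) := by
  induction t with
  | zero => exact h
  | succ t ih =>
    rw [Function.iterate_succ_apply', Function.iterate_succ_apply']
    exact P.map_mono (P.mapsTo_posQuadrant.iterate t ha).1.le
      (P.mapsTo_posQuadrant.iterate t hq).2.le ih

lemma mapsTo_R2 : Set.MapsTo P.map P.R2 P.R2 := by
  rintro p ⟨hX, hY, h₁, h₂⟩
  have hF := F_le_self P.hr₁ P.hK₁ P.hα₁ hX.le hY.le h₁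
  have hG := self_le_F P.hr₂ P.hK₂ P.hα₂ hY.le hX.le h₂
  refine ⟨F_pos P.hr₁ P.hK₁ P.hα₁ hX hY.le, F_pos P.hr₂ P.hK₂ P.hα₂ hY hX.le, ?_, ?_⟩
  · calc P.r₁ ≤ crowding P.r₁ P.K₁ P.α₁ (F P.r₁ P.K₁ P.α₁ p.1 p.2) p.2 :=
          r_le_crowding_F P.hr₁ P.hK₁ P.hα₁ hX.le hY.le h₁
      _ ≤ P.crowding₁ (P.map p) := add_le_add le_rfl (mul_le_mul_of_nonneg_left hG P.hα₁.le)
  · calc P.crowding₂ (P.map p) ≤ crowding P.r₂ P.K₂ P.α₂ (F P.r₂ P.K₂ P.α₂ p.2 p.1) p.1 :=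
          add_le_add le_rfl (mul_le_mul_of_nonneg_left hF P.hα₂.le)
      _ ≤ P.r₂ := crowding_F_le_r P.hr₂ P.hK₂ P.hα₂ hY.le hX.le h₂

lemma map_compLE_self (hp : p ∈ P.R2) : CompLE (P.map p) p :=
  ⟨F_le_self P.hr₁ P.hK₁ P.hα₁ hp.1.le hp.2.1.le hp.2.2.1,
    self_le_F P.hr₂ P.hK₂ P.hα₂ hp.2.1.le hp.1.le hp.2.2.2⟩

lemma iterate_compLE_self_of_mem_R2 (hp : p ∈ P.R2) (t : ℕ) : CompLE (P.map^[t] p) p := by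
  induction t with
  | zero => exact ⟨le_rfl, le_rfl⟩
  | succ t ih =>
    rw [Function.iterate_succ_apply']
    exact (P.map_compLE_self (P.mapsTo_R2.iterate t hp)).trans ih

lemma compLE_iterate_self_of_mem_R4 (hp : p ∈ P.R4) (t : ℕ) : CompLE p (P.map^[t] p) := by
  have := P.swap.iterate_compLE_self_of_mem_R2 hp t
  rwa [iterate_map_swap, compLE_swap] at this

lemma mapsTo_R4 : Set.MapsTo P.map P.R4 P.R4 := fun _ hp => P.swap.mapsTo_R2 hp

lemma R2_subset_posQuadrant : P.R2 ⊆ posQuadrant := fun _ hp => ⟨hp.1, hp.2.1⟩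

lemma R4_subset_posQuadrant : P.R4 ⊆ posQuadrant := fun _ hp => ⟨hp.2.1, hp.1⟩

/-- The conditions `C₁₂ = r₁ / α₁ - K₂ > 0` and `C₂₁ = r₂ / α₂ - K₁ > 0`. -/
def Coexist : Prop := P.α₁ * P.K₂ < P.r₁ ∧ P.α₂ * P.K₁ < P.r₂

variable {P}

lemma Coexist.swap (hC : P.Coexist) : P.swap.Coexist := hC.symm

lemma Coexist.K₁_lt (hC : P.Coexist) : P.K₁ < P.r₂ / P.α₂ := (lt_div_iff₀' P.hα₂).2 hC.2

lemma Coexist.det_neg (hC : P.Coexist) : P.α₁ * P.α₂ * P.K₁ * P.K₂ - P.r₁ * P.r₂ < 0 := by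
  have := mul_lt_mul'' hC.1 hC.2 (mul_pos P.hα₁ P.hK₂).le (mul_pos P.hα₂ P.hK₁).le
  linarith

/-- The competition matrix `!![r₁ / K₁, α₁; α₂, r₂ / K₂]` has positive determinant. -/
lemma Coexist.alpha_mul_lt (hC : P.Coexist) : P.α₁ * P.α₂ < P.r₁ / P.K₁ * (P.r₂ / P.K₂) := by
  rw [div_mul_div_comm, lt_div_iff₀ (mul_pos P.hK₁ P.hK₂)]
  linarith [hC.det_neg]

variable (P)

noncomputable def Estar : ℝ × ℝ :=
  (P.r₂ * P.K₁ * (P.α₁ * P.K₂ - P.r₁) / (P.α₁ * P.α₂ * P.K₁ * P.K₂ - P.r₁ * P.r₂),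
    P.r₁ * P.K₂ * (P.α₂ * P.K₁ - P.r₂) / (P.α₁ * P.α₂ * P.K₁ * P.K₂ - P.r₁ * P.r₂))

lemma Estar_swap : P.swap.Estar = P.Estar.swap := by
  simp only [Estar, swap, Prod.swap_prod_mk]
  congr 1 <;> ring

variable {P}

lemma Estar_mem (hC : P.Coexist) : P.Estar ∈ posQuadrant := by
  have fst_pos : ∀ {P : LeslieGower}, P.Coexist → 0 < P.Estar.1 := fun {P} hC =>
    div_pos_of_neg_of_neg (mul_neg_of_pos_of_neg (mul_pos P.hr₂ P.hK₁) (by linarith [hC.1]))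
      hC.det_neg
  have := fst_pos hC.swap
  rw [Estar_swap] at this
  exact ⟨fst_pos hC, this⟩

lemma crowding₁_Estar (hC : P.Coexist) : P.crowding₁ P.Estar = P.r₁ := by
  have hΔ := hC.det_neg.ne
  unfold crowding₁ crowding Estar
  rw [div_mul_div_comm, mul_div_assoc', div_add_div _ _ (mul_ne_zero P.hK₁.ne' hΔ) hΔ,
    div_eq_iff (mul_ne_zero (mul_ne_zero P.hK₁.ne' hΔ) hΔ)]
  ring

lemma crowding₂_Estar (hC : P.Coexist) : P.crowding₂ P.Estar = P.r₂ := by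
  have := crowding₁_Estar hC.swap
  rwa [Estar_swap] at this

lemma crowding₁_sub (hC : P.Coexist) (p : ℝ × ℝ) :
    P.crowding₁ p - P.r₁ = P.r₁ / P.K₁ * (p.1 - P.Estar.1) + P.α₁ * (p.2 - P.Estar.2) := by
  conv_lhs => rw [← crowding₁_Estar hC]
  unfold crowding₁ crowding
  ring

lemma crowding₂_sub (hC : P.Coexist) (p : ℝ × ℝ) :
    P.crowding₂ p - P.r₂ = P.r₂ / P.K₂ * (p.2 - P.Estar.2) + P.α₂ * (p.1 - P.Estar.1) := by
  conv_lhs => rw [← crowding₂_Estar hC]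
  unfold crowding₂ crowding
  ring

lemma Estar_compLE_of_crowding (hC : P.Coexist) (h₁ : P.r₁ ≤ P.crowding₁ p)
    (h₂ : P.crowding₂ p ≤ P.r₂) : CompLE P.Estar p := by
  have hc₂ : 0 < P.r₂ / P.K₂ := div_pos P.hr₂ P.hK₂
  have elim : (p.1 - P.Estar.1) * (P.r₁ / P.K₁ * (P.r₂ / P.K₂) - P.α₁ * P.α₂) =
      P.r₂ / P.K₂ * (P.crowding₁ p - P.r₁) - P.α₁ * (P.crowding₂ p - P.r₂) := by
    rw [crowding₁_sub hC, crowding₂_sub hC]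
    ring
  have hu : 0 ≤ p.1 - P.Estar.1 := by
    refine (mul_nonneg_iff_of_pos_right (sub_pos.2 hC.alpha_mul_lt)).1 (elim ▸ ?_)
    have := mul_nonneg hc₂.le (sub_nonneg.2 h₁)
    have := mul_nonneg P.hα₁.le (sub_nonneg.2 h₂)
    linarith
  have hv : P.r₂ / P.K₂ * (p.2 - P.Estar.2) ≤ 0 := by
    have := crowding₂_sub hC p
    linarith [mul_nonneg P.hα₂.le hu]
  exact ⟨by linarith, by linarith [nonpos_of_mul_nonpos_right hv hc₂]⟩

lemma compLE_Estar_of_crowding (hC : P.Coexist) (h₁ : P.crowding₁ p ≤ P.r₁)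
    (h₂ : P.r₂ ≤ P.crowding₂ p) : CompLE p P.Estar := by
  have := Estar_compLE_of_crowding (p := p.swap) hC.swap h₂ h₁
  rwa [Estar_swap, compLE_swap] at this

lemma eq_Estar_of_crowding (hC : P.Coexist) (h₁ : P.crowding₁ p = P.r₁)
    (h₂ : P.crowding₂ p = P.r₂) : p = P.Estar :=
  have hl := Estar_compLE_of_crowding hC h₁.ge h₂.le
  have hr := compLE_Estar_of_crowding hC h₁.le h₂.ge
  Prod.ext (le_antisymm hr.1 hl.1) (le_antisymm hl.2 hr.2)

lemma eq_Estar_of_isFixedPt (hC : P.Coexist) (hp : p ∈ posQuadrant)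
    (h : Function.IsFixedPt P.map p) : p = P.Estar :=
  eq_Estar_of_crowding hC
    (crowding_eq_of_F_eq_self P.hr₁ P.hK₁ P.hα₁ hp.1 hp.2.le (congrArg Prod.fst h))
    (crowding_eq_of_F_eq_self P.hr₂ P.hK₂ P.hα₂ hp.2 hp.1.le (congrArg Prod.snd h))

lemma fst_eq_of_map_eq_Estar (hC : P.Coexist) (hp : p ∈ posQuadrant) (h : P.map p = P.Estar) :
    p.1 = P.Estar.1 := by
  have hE₁ := crowding₁_Estar hC
  have hE₂ := crowding₂_Estar hC
  have hE := Estar_mem hC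
  have e₁ : (1 + P.r₁) * p.1 = P.Estar.1 * (1 + P.r₁ / P.K₁ * p.1 + P.α₁ * p.2) :=
    (div_eq_iff (F_denom_pos P.hr₁ P.hK₁ P.hα₁ hp.1.le hp.2.le).ne').1 (congrArg Prod.fst h)
  have e₂ : (1 + P.r₂) * p.2 = P.Estar.2 * (1 + P.r₂ / P.K₂ * p.2 + P.α₂ * p.1) :=
    (div_eq_iff (F_denom_pos P.hr₂ P.hK₂ P.hα₂ hp.2.le hp.1.le).ne').1 (congrArg Prod.snd h)
  unfold crowding₁ crowding at hE₁
  unfold crowding₂ crowding at hE₂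
  -- Given `T p = E*`, the equations for `p` are linear, with determinant `1 + α₁ Y* + α₂ X*`.
  refine mul_right_cancel₀ (by positivity [hE.1, hE.2, P.hα₁, P.hα₂] :
    1 + P.α₁ * P.Estar.2 + P.α₂ * P.Estar.1 ≠ 0) ?_
  linear_combination (1 + P.α₂ * P.Estar.1) * e₁ + (1 + P.α₂ * P.Estar.1) * p.1 * hE₁
    + P.α₁ * P.Estar.1 * e₂ + P.α₁ * P.Estar.1 * p.2 * hE₂

lemma eq_Estar_of_map_eq_Estar (hC : P.Coexist) (hp : p ∈ posQuadrant)
    (h : P.map p = P.Estar) : p = P.Estar := by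
  have h' : P.swap.map p.swap = P.swap.Estar := by rw [Estar_swap, ← h]; rfl
  have := fst_eq_of_map_eq_Estar hC.swap ⟨hp.2, hp.1⟩ h'
  rw [Estar_swap] at this
  exact Prod.ext (fst_eq_of_map_eq_Estar hC hp h) this

lemma mapsTo_diff_Estar (hC : P.Coexist) {S : Set (ℝ × ℝ)} (hS : Set.MapsTo P.map S S)
    (hpos : S ⊆ posQuadrant) : Set.MapsTo P.map (S \ {P.Estar}) (S \ {P.Estar}) :=
  fun _ hp => ⟨hS hp.1, fun he => hp.2 (eq_Estar_of_map_eq_Estar hC (hpos hp.1) he)⟩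

theorem tendsto_iterate_of_mem_R2 (hC : P.Coexist) (hp : p ∈ P.R2) :
    Tendsto (fun t => P.map^[t] p) atTop (𝓝 P.Estar) := by
  have horbit : ∀ t, P.map^[t] p ∈ P.R2 := fun t => P.mapsTo_R2.iterate t hp
  have hE : ∀ t, CompLE P.Estar (P.map^[t] p) := fun t =>
    Estar_compLE_of_crowding hC (horbit t).2.2.1 (horbit t).2.2.2
  have hstep : ∀ t, CompLE (P.map^[t + 1] p) (P.map^[t] p) := fun t => by
    rw [Function.iterate_succ_apply']
    exact P.map_compLE_self (horbit t)
  have hbdd₂ : BddAbove (Set.range fun t => (P.map^[t] p).2) :=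
    ⟨_, Set.forall_mem_range.2 fun t => (hE t).2⟩
  have hL : Tendsto (fun t => P.map^[t] p) atTop
      (𝓝 (⨅ t, (P.map^[t] p).1, ⨆ t, (P.map^[t] p).2)) :=
    (tendsto_atTop_ciInf (antitone_nat_of_succ_le fun t => (hstep t).1)
      ⟨_, Set.forall_mem_range.2 fun t => (hE t).1⟩).prodMk_nhds
    (tendsto_atTop_ciSup (monotone_nat_of_le_succ fun t => (hstep t).2) hbdd₂)
  have hLpos : (⨅ t, (P.map^[t] p).1, ⨆ t, (P.map^[t] p).2) ∈ posQuadrant :=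
    ⟨(Estar_mem hC).1.trans_le (le_ciInf fun t => (hE t).1),
      hp.2.1.trans_le (le_ciSup hbdd₂ 0)⟩
  rwa [eq_Estar_of_isFixedPt hC hLpos
    (isFixedPt_of_tendsto_iterate hL (P.continuousAt_map hLpos))] at hL

theorem tendsto_iterate_of_mem_R4 (hC : P.Coexist) (hp : p ∈ P.R4) :
    Tendsto (fun t => P.map^[t] p) atTop (𝓝 P.Estar) := by
  have := (continuous_swap.tendsto _).comp (tendsto_iterate_of_mem_R2 hC.swap hp)
  simpa only [Function.comp_def, iterate_map_swap, Prod.swap_swap, Estar_swap] using this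

lemma eventually_fst_iterate_lt (hp : p ∈ posQuadrant) {M : ℝ} (hM : P.K₁ < M) :
    ∀ᶠ t in atTop, (P.map^[t] p).1 < M := by
  have hpos : ∀ t, P.map^[t] p ∈ posQuadrant := fun t => P.mapsTo_posQuadrant.iterate t hp
  have hρ : 0 < (1 + P.r₁)⁻¹ := by have := P.hr₁; positivity
  have hbound : ∀ t : ℕ,
      (p.1⁻¹ - P.K₁⁻¹) * (1 + P.r₁)⁻¹ ^ t ≤ ((P.map^[t] p).1)⁻¹ - P.K₁⁻¹ := by
    intro t
    induction t with
    | zero => simp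
    | succ t ih =>
      rw [pow_succ, ← mul_assoc, Function.iterate_succ_apply']
      calc _ ≤ (((P.map^[t] p).1)⁻¹ - P.K₁⁻¹) * (1 + P.r₁)⁻¹ :=
            mul_le_mul_of_nonneg_right ih hρ.le
        _ ≤ _ := by
          rw [← div_eq_mul_inv]
          exact inv_F_sub_inv_K P.hr₁ P.hK₁ P.hα₁ (hpos t).1 (hpos t).2.le
  have hlim : Tendsto (fun t : ℕ => (p.1⁻¹ - P.K₁⁻¹) * (1 + P.r₁)⁻¹ ^ t) atTop (𝓝 0) := by
    simpa using (tendsto_pow_atTop_nhds_zero_of_lt_one hρ.le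
      (inv_lt_one_of_one_lt₀ (by linarith [P.hr₁]))).const_mul (p.1⁻¹ - P.K₁⁻¹)
  have hgap : M⁻¹ - P.K₁⁻¹ < 0 := sub_neg.2 (inv_strictAnti₀ P.hK₁ hM)
  filter_upwards [hlim.eventually (eventually_gt_nhds hgap)] with t ht
  exact (inv_lt_inv₀ (P.hK₁.trans hM) (hpos t).1).1 (by linarith [hbound t])

lemma eventually_snd_iterate_lt (hp : p ∈ posQuadrant) {M : ℝ} (hM : P.K₂ < M) :
    ∀ᶠ t in atTop, (P.map^[t] p).2 < M := by
  simpa only [iterate_map_swap, Prod.fst_swap] using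
    eventually_fst_iterate_lt (P := P.swap) (p := p.swap) ⟨hp.2, hp.1⟩ hM

variable (P) in
lemma continuous_h : Continuous (h P.r₁ P.K₁ P.α₁) := by
  unfold h
  fun_prop

lemma h_Estar (hC : P.Coexist) : h P.r₁ P.K₁ P.α₁ P.Estar.1 = P.Estar.2 := by
  have := crowding₁_Estar hC
  rw [h_eq_div P.hK₁ P.hα₁, div_eq_iff P.hα₁.ne']
  unfold crowding₁ crowding at this
  linarith

lemma mem_R4_of_h (hC : P.Coexist) {x : ℝ} (hx : 0 < x) (hxE : x ≤ P.Estar.1) :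
    (x, h P.r₁ P.K₁ P.α₁ x) ∈ P.R4 := by
  set y := h P.r₁ P.K₁ P.α₁ x
  have hy : P.crowding₁ (x, y) = P.r₁ := by
    simp only [crowding₁, crowding, y, h_eq_div P.hK₁ P.hα₁]
    rw [mul_div_cancel₀ _ P.hα₁.ne']
    ring
  have e₁ := crowding₁_sub hC (x, y)
  have e₂ := crowding₂_sub hC (x, y)
  have hv : P.α₁ * (y - P.Estar.2) = P.r₁ / P.K₁ * (P.Estar.1 - x) := by
    simp only at e₁
    linarith
  have hyE : 0 ≤ y - P.Estar.2 := (mul_nonneg_iff_of_pos_left P.hα₁).1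
    (hv ▸ mul_nonneg (div_pos P.hr₁ P.hK₁).le (sub_nonneg.2 hxE))
  refine ⟨(Estar_mem hC).2.trans_le (sub_nonneg.1 hyE), hx, ?_, hy.le⟩
  have elim : P.α₁ * (P.crowding₂ (x, y) - P.r₂) =
      (P.Estar.1 - x) * (P.r₁ / P.K₁ * (P.r₂ / P.K₂) - P.α₁ * P.α₂) := by
    rw [e₂]
    simp only
    linear_combination P.r₂ / P.K₂ * hv
  have := mul_nonneg (sub_nonneg.2 hxE) (sub_pos.2 hC.alpha_mul_lt).le
  rw [← elim] at this
  exact sub_nonneg.1 ((mul_nonneg_iff_of_pos_left P.hα₁).1 this)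

lemma exists_mem_R4_compLE (hC : P.Coexist) (hq : q ∈ posQuadrant) (hq₂ : q.2 < P.r₁ / P.α₁) :
    ∃ a ∈ P.R4, CompLE a q := by
  have h0 : h P.r₁ P.K₁ P.α₁ 0 = P.r₁ / P.α₁ := by
    rw [h_eq_div P.hK₁ P.hα₁]
    ring
  have hlim : Tendsto (h P.r₁ P.K₁ P.α₁) (𝓝[>] 0) (𝓝 (P.r₁ / P.α₁)) :=
    h0 ▸ (P.continuous_h.tendsto 0).mono_left nhdsWithin_le_nhds
  have hev : ∀ᶠ x in 𝓝[>] (0 : ℝ),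
      x ∈ Set.Ioi 0 ∧ (x ≤ q.1 ∧ x ≤ P.Estar.1) ∧ q.2 ≤ h P.r₁ P.K₁ P.α₁ x :=
    eventually_mem_nhdsWithin.and <|
      (eventually_nhdsWithin_of_eventually_nhds
        ((eventually_le_nhds hq.1).and (eventually_le_nhds (Estar_mem hC).1))).and
        (hlim.eventually (eventually_ge_nhds hq₂))
  obtain ⟨x, hx, ⟨hxq, hxE⟩, hqx⟩ := hev.exists
  exact ⟨_, mem_R4_of_h hC hx hxE, hxq, hqx⟩

lemma exists_mem_R2_compLE (hC : P.Coexist) (hq : q ∈ posQuadrant) (hq₁ : q.1 < P.r₂ / P.α₂) :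
    ∃ b ∈ P.R2, CompLE q b := by
  obtain ⟨a, ha, haq⟩ := exists_mem_R4_compLE (q := q.swap) hC.swap ⟨hq.2, hq.1⟩ hq₁
  exact ⟨a.swap, ha, compLE_swap.1 haq⟩

lemma exists_mem_R4_near_Estar (hC : P.Coexist) {ε : ℝ} (hε : 0 < ε) :
    ∃ a ∈ P.R4, a.1 < P.Estar.1 ∧ P.Estar.2 < a.2 ∧ dist a P.Estar < ε := by
  have hlim : Tendsto (fun x => (x, h P.r₁ P.K₁ P.α₁ x)) (𝓝[<] P.Estar.1) (𝓝 P.Estar) := by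
    have := ((continuous_id.prodMk P.continuous_h).tendsto P.Estar.1).mono_left
      (nhdsWithin_le_nhds (s := Set.Iio P.Estar.1))
    rwa [id, h_Estar hC] at this
  have hev : ∀ᶠ x in 𝓝[<] P.Estar.1,
      x ∈ Set.Iio P.Estar.1 ∧ 0 < x ∧ dist (x, h P.r₁ P.K₁ P.α₁ x) P.Estar < ε :=
    eventually_mem_nhdsWithin.and <|
      (eventually_nhdsWithin_of_eventually_nhds (eventually_gt_nhds (Estar_mem hC).1)).and
      (hlim.eventually (Metric.ball_mem_nhds _ hε))
  obtain ⟨x, hxE, hx, hxε⟩ := hev.exists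
  refine ⟨_, mem_R4_of_h hC hx hxE.le, hxE, ?_, hxε⟩
  rw [← h_Estar hC]
  unfold h
  exact mul_lt_mul_of_pos_left (by linarith [Set.mem_Iio.1 hxE])
    (div_pos P.hr₁ (mul_pos P.hα₁ P.hK₁))

lemma exists_mem_R2_near_Estar (hC : P.Coexist) {ε : ℝ} (hε : 0 < ε) :
    ∃ b ∈ P.R2, P.Estar.1 < b.1 ∧ b.2 < P.Estar.2 ∧ dist b P.Estar < ε := by
  obtain ⟨a, ha, ha₁, ha₂, haε⟩ := exists_mem_R4_near_Estar hC.swap hε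
  rw [Estar_swap] at ha₁ ha₂ haε
  refine ⟨a.swap, ha, ha₂, ha₁, ?_⟩
  rw [Prod.dist_eq] at haε ⊢
  rwa [max_comm]

lemma compLE_iterate_of_between (ha : a ∈ P.R4) (hb : b ∈ P.R2) (hq : q ∈ posQuadrant)
    (haq : CompLE a q) (hqb : CompLE q b) (t : ℕ) :
    CompLE (P.map^[t] a) (P.map^[t] q) ∧ CompLE (P.map^[t] q) (P.map^[t] b) :=
  ⟨P.iterate_mono (P.R4_subset_posQuadrant ha) hq haq t,
    P.iterate_mono hq (P.R2_subset_posQuadrant hb) hqb t⟩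

theorem Estar_stable (hC : P.Coexist) {ε : ℝ} (hε : 0 < ε) : ∃ δ > 0, ∀ p ∈ posQuadrant,
    dist p P.Estar < δ → ∀ t : ℕ, dist (P.map^[t] p) P.Estar < ε := by
  obtain ⟨a, ha, ha₁, ha₂, haε⟩ := exists_mem_R4_near_Estar hC hε
  obtain ⟨b, hb, hb₁, hb₂, hbε⟩ := exists_mem_R2_near_Estar hC hε
  obtain ⟨δ, hδ, hball⟩ := Metric.mem_nhds_iff.1 <|
    (isOpen_Ioo.prod isOpen_Ioo).mem_nhds (show P.Estar ∈ Set.Ioo a.1 b.1 ×ˢ Set.Ioo b.2 a.2 from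
      ⟨⟨ha₁, hb₁⟩, hb₂, ha₂⟩)
  refine ⟨δ, hδ, fun p hp hpE t => ?_⟩
  obtain ⟨⟨hap₁, hpb₁⟩, hbp₂, hpa₂⟩ := hball hpE
  obtain ⟨hat, htb⟩ :=
    compLE_iterate_of_between ha hb hp ⟨hap₁.le, hpa₂.le⟩ ⟨hpb₁.le, hbp₂.le⟩ t
  exact (dist_le_max_of_compLE ((P.compLE_iterate_self_of_mem_R4 ha t).trans hat)
    (htb.trans (P.iterate_compLE_self_of_mem_R2 hb t)) _).trans_lt (max_lt haε hbε)

theorem tendsto_iterate_Estar (hC : P.Coexist) (hp : p ∈ posQuadrant) :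
    Tendsto (fun t => P.map^[t] p) atTop (𝓝 P.Estar) := by
  obtain ⟨N, hN₁, hN₂⟩ := ((eventually_fst_iterate_lt hp hC.K₁_lt).and
    (eventually_snd_iterate_lt hp hC.swap.K₁_lt)).exists
  have hq := P.mapsTo_posQuadrant.iterate N hp
  obtain ⟨a, ha, haq⟩ := exists_mem_R4_compLE hC hq hN₂
  obtain ⟨b, hb, hqb⟩ := exists_mem_R2_compLE hC hq hN₁
  rw [← tendsto_add_atTop_iff_nat N]
  simp only [Function.iterate_add_apply]
  exact tendsto_of_compLE_of_compLE (tendsto_iterate_of_mem_R4 hC ha)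
    (tendsto_iterate_of_mem_R2 hC hb) (fun t => (compLE_iterate_of_between ha hb hq haq hqb t).1)
    (fun t => (compLE_iterate_of_between ha hb hq haq hqb t).2)

end LeslieGower

theorem stmt17 (r₁ r₂ K₁ K₂ α₁ α₂ : ℝ)
    (hr₁ : 0 < r₁) (hr₂ : 0 < r₂) (hK₁ : 0 < K₁) (hK₂ : 0 < K₂)
    (hα₁ : 0 < α₁) (hα₂ : 0 < α₂)
    (hC12 : 0 < r₁ / α₁ - K₂) (hC21 : 0 < r₂ / α₂ - K₁)
    (Xs Ys : ℝ)
    (hXs : Xs = r₂ * K₁ * (α₁ * K₂ - r₁) / (α₁ * α₂ * K₁ * K₂ - r₁ * r₂))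
    (hYs : Ys = r₁ * K₂ * (α₂ * K₁ - r₂) / (α₁ * α₂ * K₁ * K₂ - r₁ * r₂)) :
    (∀ X Y : ℝ, 0 < X → 0 < Y → h r₁ K₁ α₁ X ≤ Y → Y ≤ k r₂ K₂ α₂ X →
        (X, Y) ≠ (Xs, Ys) →
        0 < F r₁ K₁ α₁ X Y ∧ 0 < G r₂ K₂ α₂ X Y ∧
          h r₁ K₁ α₁ (F r₁ K₁ α₁ X Y) ≤ G r₂ K₂ α₂ X Y ∧
          G r₂ K₂ α₂ X Y ≤ k r₂ K₂ α₂ (F r₁ K₁ α₁ X Y) ∧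
          (F r₁ K₁ α₁ X Y, G r₂ K₂ α₂ X Y) ≠ (Xs, Ys)) ∧
    (∀ X Y : ℝ, 0 < X → 0 < Y → k r₂ K₂ α₂ X ≤ Y → Y ≤ h r₁ K₁ α₁ X →
        (X, Y) ≠ (Xs, Ys) →
        0 < F r₁ K₁ α₁ X Y ∧ 0 < G r₂ K₂ α₂ X Y ∧
          k r₂ K₂ α₂ (F r₁ K₁ α₁ X Y) ≤ G r₂ K₂ α₂ X Y ∧
          G r₂ K₂ α₂ X Y ≤ h r₁ K₁ α₁ (F r₁ K₁ α₁ X Y) ∧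
          (F r₁ K₁ α₁ X Y, G r₂ K₂ α₂ X Y) ≠ (Xs, Ys)) ∧
    (∀ ε > (0 : ℝ), ∃ δ > (0 : ℝ), ∀ p : ℝ × ℝ, 0 < p.1 → 0 < p.2 →
        dist p (Xs, Ys) < δ →
        ∀ t : ℕ, dist ((T r₁ r₂ K₁ K₂ α₁ α₂)^[t] p) (Xs, Ys) < ε) ∧
    (∀ p : ℝ × ℝ, 0 < p.1 → 0 < p.2 →
        Filter.Tendsto (fun t => (T r₁ r₂ K₁ K₂ α₁ α₂)^[t] p) Filter.atTop
          (nhds (Xs, Ys))) := by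
  subst hXs hYs
  let P : LeslieGower := ⟨r₁, r₂, K₁, K₂, α₁, α₂, hr₁, hr₂, hK₁, hK₂, hα₁, hα₂⟩
  have hC : P.Coexist :=
    ⟨(lt_div_iff₀' hα₁).1 (sub_pos.1 hC12), (lt_div_iff₀' hα₂).1 (sub_pos.1 hC21)⟩
  refine ⟨fun X Y hX hY hh hk hne => ?_, fun X Y hX hY hk hh hne => ?_,
    fun ε hε => ?_, fun p hp₁ hp₂ => P.tendsto_iterate_Estar hC ⟨hp₁, hp₂⟩⟩
  · obtain ⟨hR, hne'⟩ := P.mapsTo_diff_Estar hC P.mapsTo_R2 P.R2_subset_posQuadrant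
      ⟨P.mem_R2_iff.2 ⟨hX, hY, hh, hk⟩, hne⟩
    obtain ⟨hF, hG, h₁, h₂⟩ := P.mem_R2_iff.1 hR
    exact ⟨hF, hG, h₁, h₂, hne'⟩
  · obtain ⟨hR, hne'⟩ := P.mapsTo_diff_Estar hC P.mapsTo_R4 P.R4_subset_posQuadrant
      ⟨P.mem_R4_iff.2 ⟨hX, hY, hk, hh⟩, hne⟩
    obtain ⟨hF, hG, h₁, h₂⟩ := P.mem_R4_iff.1 hR
    exact ⟨hF, hG, h₁, h₂, hne'⟩
  · obtain ⟨δ, hδ, hstable⟩ := P.Estar_stable hC hε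
    exact ⟨δ, hδ, fun p hp₁ hp₂ => hstable p ⟨hp₁, hp₂⟩⟩
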